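/- Fix $0 < \alpha < 1$ and $0 < k < 1$, and set $r = 1 - \alpha$, $n_p = \lfloor p^k \rfloor$, $s_p = \lfloor C \log p \rfloor$ for a constant $C > 0$, and $a_p^2 = \frac{2 r \log p}{n_p}$. Define $f_1(p) = \frac{\log(p - s_p + 1) - 1}{\frac{1}{2}\log\left(1 + a_p^2 \left(1 - \frac{1}{p - s_p + 1}\right)\right)}$. Then $\lim_{p \to \infty} \frac{f_1(p)}{n_p} = \frac{1}{1 - \alpha} > 1$; in particular $f_1(p) > n_p$ for all sufficiently large $p$. -/

import Mathlib

open Filter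

noncomputable def np (k : ℝ) (p : ℕ) : ℕ := ⌊(p:ℝ)^k⌋₊

noncomputable def sp (C : ℝ) (p : ℕ) : ℕ := ⌊C * Real.log p⌋₊

noncomputable def asq (α k : ℝ) (p : ℕ) : ℝ :=
  2 * (1 - α) * Real.log p / (np k p : ℝ)

noncomputable def f1 (α k C : ℝ) (p : ℕ) : ℝ :=
  (Real.log ((p:ℝ) - (sp C p : ℝ) + 1) - 1) /
    ((1/2) * Real.log (1 + asq α k p * (1 - 1/((p:ℝ) - (sp C p : ℝ) + 1))))

/-! Numerator and denominator of `f1 p / n_p` are both asymptotic to multiples of `log p`.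
Since `s_p = O(log p) = o(p)`, we get `log (p - s_p + 1) - 1 ~ log p`. Since `log p = o(p ^ k)`,
`a_p² → 0`, so `log (1 + x) ~ x` at `0` gives `½ log (1 + a_p² t_p) · n_p ~ ½ a_p² t_p n_p`,
which equals `(1 - α) t_p log p` with `t_p = 1 - 1 / (p - s_p + 1) → 1`. -/

open Asymptotics Topology Real

lemma isEquivalent_log_one_add : (fun x : ℝ => log (1 + x)) ~[𝓝 0] id := by
  have h := hasDerivAt_log (one_ne_zero (α := ℝ))
  rw [hasDerivAt_iff_isLittleO_nhds_zero] at h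
  simp only [log_one, sub_zero, smul_eq_mul, inv_one, mul_one] at h
  exact h

lemma isEquivalent_np {k : ℝ} (hk : 0 < k) :
    (fun p => (np k p : ℝ)) ~[atTop] fun p => (p : ℝ) ^ k :=
  isEquivalent_nat_floor.comp_tendsto ((tendsto_rpow_atTop hk).comp tendsto_natCast_atTop_atTop)

lemma tendsto_np_atTop {k : ℝ} (hk : 0 < k) : Tendsto (fun p => (np k p : ℝ)) atTop atTop :=
  (isEquivalent_np hk).symm.tendsto_atTop
    ((tendsto_rpow_atTop hk).comp tendsto_natCast_atTop_atTop)

lemma isLittleO_log_np {k : ℝ} (hk : 0 < k) :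
    (fun p : ℕ => log p) =o[atTop] fun p => (np k p : ℝ) :=
  ((isLittleO_log_rpow_atTop hk).comp_tendsto tendsto_natCast_atTop_atTop).trans_isEquivalent
    (isEquivalent_np hk).symm

lemma tendsto_asq_zero (α : ℝ) {k : ℝ} (hk : 0 < k) : Tendsto (asq α k) atTop (𝓝 0) := by
  have h := (isLittleO_log_np hk).tendsto_div_nhds_zero.const_mul (2 * (1 - α))
  rw [mul_zero] at h
  exact h.congr fun p => by rw [asq, mul_div_assoc]

lemma isLittleO_sp {C : ℝ} (hC : 0 ≤ C) :
    (fun p => (sp C p : ℝ)) =o[atTop] fun p : ℕ => (p : ℝ) := by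
  have hbig : (fun p => (sp C p : ℝ)) =O[atTop] fun p : ℕ => log p := by
    refine IsBigO.of_bound C (Eventually.of_forall fun p => ?_)
    have hlog : 0 ≤ log p := log_natCast_nonneg p
    rw [Real.norm_natCast, norm_of_nonneg hlog]
    exact Nat.floor_le (mul_nonneg hC hlog)
  exact hbig.trans_isLittleO (isLittleO_log_id_atTop.comp_tendsto tendsto_natCast_atTop_atTop)

lemma isEquivalent_sub_sp_add_one {C : ℝ} (hC : 0 ≤ C) :
    (fun p : ℕ => (p : ℝ) - sp C p + 1) ~[atTop] fun p => (p : ℝ) :=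
  (IsEquivalent.refl.sub_isLittleO (isLittleO_sp hC)).add_const_of_norm_tendsto_atTop
    (tendsto_norm_atTop_atTop.comp tendsto_natCast_atTop_atTop)

lemma isEquivalent_log_sub_sp_add_one_sub_one {C : ℝ} (hC : 0 ≤ C) :
    (fun p : ℕ => log ((p : ℝ) - sp C p + 1) - 1) ~[atTop] fun p => log p :=
  ((isEquivalent_sub_sp_add_one hC).log tendsto_natCast_atTop_atTop)
    |>.add_const_of_norm_tendsto_atTop
      (tendsto_norm_atTop_atTop.comp (tendsto_log_atTop.comp tendsto_natCast_atTop_atTop))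

lemma tendsto_one_sub_inv_sub_sp_add_one {C : ℝ} (hC : 0 ≤ C) :
    Tendsto (fun p : ℕ => 1 - 1 / ((p : ℝ) - sp C p + 1)) atTop (𝓝 1) := by
  have h := (isEquivalent_sub_sp_add_one hC).symm.tendsto_atTop tendsto_natCast_atTop_atTop
  simpa using tendsto_const_nhds.sub h.inv_tendsto_atTop

lemma tendsto_f1_div_np {α k C : ℝ} (hα : α ≠ 1) (hk : 0 < k) (hC : 0 ≤ C) :
    Tendsto (fun p => f1 α k C p / np k p) atTop (𝓝 (1 / (1 - α))) := by
  set t : ℕ → ℝ := fun p => 1 - 1 / ((p : ℝ) - sp C p + 1)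
  have ht : Tendsto t atTop (𝓝 1) := tendsto_one_sub_inv_sub_sp_add_one hC
  have hx : Tendsto (fun p => asq α k p * t p) atTop (𝓝 0) := by
    simpa using (tendsto_asq_zero α hk).mul ht
  have hden : (fun p => 1 / 2 * log (1 + asq α k p * t p) * np k p) ~[atTop]
      fun p => (1 - α) * t p * log p := by
    have h := (IsEquivalent.refl (u := fun _ : ℕ => (1 / 2 : ℝ))).mul
      ((isEquivalent_log_one_add.comp_tendsto hx).mul
        (IsEquivalent.refl (u := fun p => (np k p : ℝ))))
    refine (h.congr_left (.of_eq ?_)).congr_right ?_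
    · ext p; simp only [Pi.mul_apply, Function.comp_apply]; ring
    · filter_upwards [(tendsto_np_atTop hk).eventually_ne_atTop 0] with p hp
      simp only [Pi.mul_apply, Function.comp_apply, id, asq]
      field_simp
  have hequiv : (fun p => f1 α k C p / np k p) ~[atTop]
      fun p => log p / ((1 - α) * t p * log p) :=
    ((isEquivalent_log_sub_sp_add_one_sub_one hC).div hden).congr_left
      (.of_eq (funext fun p => by simp only [f1, Pi.div_apply, t, div_div]))
  refine hequiv.symm.tendsto_nhds ?_
  have hlim : Tendsto (fun p => 1 / ((1 - α) * t p)) atTop (𝓝 (1 / (1 - α))) := by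
    simpa using (ht.const_mul (1 - α)).inv₀ (by simpa using sub_ne_zero.2 hα.symm)
  refine hlim.congr' ?_
  filter_upwards [eventually_gt_atTop 1] with p hp
  have hlog : log p ≠ 0 := (log_pos (by exact_mod_cast hp)).ne'
  rw [div_mul_cancel_right₀ hlog, one_div]

theorem stmt_15_general (α k C : ℝ) (hα : 0 < α) (hα1 : α < 1)
    (hk : 0 < k) (hC : 0 < C) :
    Tendsto (fun p : ℕ => f1 α k C p / (np k p : ℝ)) atTop (nhds (1/(1-α))) ∧
    1 < 1/(1-α) ∧
    ∀ᶠ p : ℕ in atTop, (np k p : ℝ) < f1 α k C p := by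
  have hlim := tendsto_f1_div_np hα1.ne hk hC.le
  have hone : 1 < 1 / (1 - α) := one_lt_one_div (by linarith) (by linarith)
  refine ⟨hlim, hone, ?_⟩
  filter_upwards [hlim.eventually_const_lt hone, (tendsto_np_atTop hk).eventually_gt_atTop 0]
    with p hlt hnp
  rwa [one_lt_div hnp] at hlt

theorem stmt_15 (α k C : ℝ) (hα : 0 < α) (hα1 : α < 1)
    (hk : 0 < k) (hk1 : k < 1) (hC : 0 < C) :
    Tendsto (fun p : ℕ => f1 α k C p / (np k p : ℝ)) atTop (nhds (1/(1-α))) ∧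
    1 < 1/(1-α) ∧
    ∀ᶠ p : ℕ in atTop, (np k p : ℝ) < f1 α k C p :=
  stmt_15_general α k C hα hα1 hk hC
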